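/- arXiv:2105.08919 — 3 statements merged into one kernel-verified Lean document; each statement's English description precedes it below -/
import Mathlib

section
/- For any fixed logit vector z ∈ ℝ^K (K ≥ 1) and any class index k, lim_{τ→∞} τ·(p_k(z,τ) − 1/K) = (1/K)·(z_k − (1/K)∑_{j=1}^K z_j). -/
open Filter Topology

/-!
With `x = τ⁻¹`, the quantity `τ * (p_k(z, τ) - 1/K)` is the difference quotient at `0` of
`x ↦ exp (z_k x) / ∑ⱼ exp (z_j x)`, whose value at `0` is `1/K`; the limit is therefore the
derivative of this quotient at `0`, computed by the quotient rule.
-/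

/-- Softened probability of class `k` for logit vector `z` at temperature `τ`. -/
noncomputable def softProb {K : ℕ} (z : Fin K → ℝ) (τ : ℝ) (k : Fin K) : ℝ :=
  Real.exp (z k / τ) / ∑ j, Real.exp (z j / τ)

/-- Distillation loss `L_KL` between student logits `zs` and teacher logits `zt`
at temperature `τ`. -/
noncomputable def LKL {K : ℕ} (zs zt : Fin K → ℝ) (τ : ℝ) : ℝ :=
  τ ^ 2 * ∑ j, softProb zt τ j * Real.log (softProb zt τ j / softProb zs τ j)

theorem HasDerivAt.tendsto_smul_sub_inv_atTop {E : Type*} [NormedAddCommGroup E]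
    [NormedSpace ℝ E] {f : ℝ → E} {f' : E} (hf : HasDerivAt f f' 0) :
    Tendsto (fun τ : ℝ => τ • (f τ⁻¹ - f 0)) atTop (𝓝 f') := by
  have hinv : Tendsto (fun τ : ℝ => τ⁻¹) atTop (𝓝[≠] 0) :=
    tendsto_nhdsWithin_of_tendsto_nhds_of_eventually_within _ tendsto_inv_atTop_zero
      (eventually_ne_atTop 0 |>.mono fun τ hτ => inv_ne_zero hτ)
  refine ((hasDerivAt_iff_tendsto_slope.mp hf).comp hinv).congr fun τ => ?_
  simp [slope_def_module]

theorem softProb_inv_eq {K : ℕ} (z : Fin K → ℝ) (x : ℝ) (k : Fin K) :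
    softProb z x⁻¹ k = Real.exp (z k * x) / ∑ j, Real.exp (z j * x) := by
  simp only [softProb, div_inv_eq_mul]

theorem hasDerivAt_softProb_inv_zero {K : ℕ} (z : Fin K → ℝ) (k : Fin K) :
    HasDerivAt (fun x => softProb z x⁻¹ k)
      ((1 / (K : ℝ)) * (z k - (1 / (K : ℝ)) * ∑ j, z j)) 0 := by
  have hK : (K : ℝ) ≠ 0 := Nat.cast_ne_zero.mpr (Fin.pos k).ne'
  have hexp : ∀ j, HasDerivAt (fun x => Real.exp (z j * x)) (z j) 0 := fun j => by
    simpa using ((hasDerivAt_id (0 : ℝ)).const_mul (z j)).exp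
  have hsum : HasDerivAt (fun x => ∑ j, Real.exp (z j * x)) (∑ j, z j) 0 := by
    simpa using HasDerivAt.fun_sum fun j _ => hexp j
  rw [show (fun x => softProb z x⁻¹ k) = _ from funext (softProb_inv_eq z · k)]
  refine ((hexp k).fun_div hsum (by simpa using hK)).congr_deriv ?_
  simp only [mul_zero, Real.exp_zero, Finset.sum_const, Finset.card_univ, Fintype.card_fin,
    nsmul_eq_mul, mul_one]
  field_simp

theorem stmt_2_general {K : ℕ} (z : Fin K → ℝ) (k : Fin K) :
    Tendsto (fun τ : ℝ => τ * (softProb z τ k - 1 / (K : ℝ))) atTop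
      (𝓝 ((1 / (K : ℝ)) * (z k - (1 / (K : ℝ)) * ∑ j, z j))) := by
  simpa [softProb] using (hasDerivAt_softProb_inv_zero z k).tendsto_smul_sub_inv_atTop

/-- `lim_{τ→∞} τ·(p_k(z,τ) − 1/K) = (1/K)·(z_k − (1/K)∑_j z_j)`. -/
theorem stmt_2 {K : ℕ} (hK : 1 ≤ K) (z : Fin K → ℝ) (k : Fin K) :
    Tendsto (fun τ : ℝ => τ * (softProb z τ k - 1 / (K : ℝ))) atTop
      (𝓝 ((1 / (K : ℝ)) * (z k - (1 / (K : ℝ)) * ∑ j, z j))) :=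
  stmt_2_general z k
end

section
/- (Proposition 1, large-temperature limit.) For logit vectors z^s, z^t ∈ ℝ^K (K ≥ 1) and any class index k, lim_{τ→∞} τ·(p_k(z^s,τ) − p_k(z^t,τ)) = (1/K²) ∑_{j=1}^K ((z^s_k − z^s_j) − (z^t_k − z^t_j)); equivalently, the gradient of the distillation loss L_KL in z^s_k converges, as τ → ∞, to (1/K²) ∑_{j=1}^K ((z^s_k − z^s_j) − (z^t_k − z^t_j)). -/
open Filter Topology

/-!
With inverse temperature `β = 1/τ`, the softened probability is `β ↦ exp (β z_k) / ∑_j exp (β z_j)`,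
which equals `1/K` at `β = 0` for every logit vector. Hence `τ (p_k(z^s,τ) - p_k(z^t,τ))` is the
difference quotient at `0`, with step `1/τ`, of the difference of the two such functions, and it
tends to the difference of their derivatives at `0`, namely `(1/K²) ∑_j (z_k - z_j)`.
-/

lemma HasDerivAt.tendsto_mul_sub_inv_atTop {f : ℝ → ℝ} {d : ℝ} (hf : HasDerivAt f d 0) :
    Tendsto (fun τ : ℝ => τ * (f τ⁻¹ - f 0)) atTop (𝓝 d) := by
  have hslope : Tendsto (slope f 0) (𝓝[>] 0) (𝓝 d) :=
    (hasDerivAt_iff_tendsto_slope.mp hf).mono_left (nhdsGT_le_nhdsNE 0)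
  refine (hslope.comp tendsto_inv_atTop_nhdsGT_zero).congr fun τ => ?_
  simp [slope_def_field, mul_comm]

section Softmax

variable {ι : Type*} [Fintype ι]

noncomputable def softmax (z : ι → ℝ) (β : ℝ) (k : ι) : ℝ :=
  Real.exp (β * z k) / ∑ j, Real.exp (β * z j)

lemma softmax_zero (z : ι → ℝ) (k : ι) : softmax z 0 k = (Fintype.card ι : ℝ)⁻¹ := by
  simp [softmax]

lemma hasDerivAt_softmax_zero [Nonempty ι] (z : ι → ℝ) (k : ι) :
    HasDerivAt (fun β => softmax z β k)
      ((1 / (Fintype.card ι : ℝ) ^ 2) * ∑ j, (z k - z j)) 0 := by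
  have hexp : ∀ i, HasDerivAt (fun β : ℝ => Real.exp (β * z i)) (z i) 0 := fun i => by
    simpa using ((hasDerivAt_id (0 : ℝ)).mul_const (z i)).exp
  have hsum : ∑ j : ι, Real.exp (0 * z j) = Fintype.card ι := by simp
  refine ((hexp k).div (HasDerivAt.fun_sum fun j _ => hexp j)
    (by rw [hsum]; positivity)).congr_deriv ?_
  rw [hsum, Finset.sum_sub_distrib]
  simp only [zero_mul, Real.exp_zero, one_mul, Finset.sum_const, Finset.card_univ, nsmul_eq_mul]
  field_simp

end Softmax

lemma softProb_eq_softmax_inv {K : ℕ} (z : Fin K → ℝ) (τ : ℝ) (k : Fin K) :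
    softProb z τ k = softmax z τ⁻¹ k := by
  simp only [softProb, softmax, div_eq_inv_mul]

theorem stmt_3_general {K : ℕ} (zs zt : Fin K → ℝ) (k : Fin K) :
    Tendsto (fun τ : ℝ => τ * (softProb zs τ k - softProb zt τ k)) atTop
      (𝓝 ((1 / (K : ℝ) ^ 2) * ∑ j, ((zs k - zs j) - (zt k - zt j)))) := by
  have : Nonempty (Fin K) := ⟨k⟩
  have hdiff := (hasDerivAt_softmax_zero zs k).fun_sub (hasDerivAt_softmax_zero zt k)
  rw [Fintype.card_fin, ← mul_sub, ← Finset.sum_sub_distrib] at hdiff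
  refine hdiff.tendsto_mul_sub_inv_atTop.congr fun τ => ?_
  simp only [softProb_eq_softmax_inv, softmax_zero, sub_self, sub_zero]

/-- Proposition 1, large-temperature limit: the gradient `τ·(p_k(z^s,τ) − p_k(z^t,τ))`
of `L_KL` in `z^s_k` converges, as `τ → ∞`, to
`(1/K²) ∑_j ((z^s_k − z^s_j) − (z^t_k − z^t_j))`. -/
theorem stmt_3 {K : ℕ} (hK : 1 ≤ K) (zs zt : Fin K → ℝ) (k : Fin K) :
    Tendsto (fun τ : ℝ => τ * (softProb zs τ k - softProb zt τ k)) atTop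
      (𝓝 ((1 / (K : ℝ) ^ 2) * ∑ j, ((zs k - zs j) - (zt k - zt j)))) :=
  stmt_3_general zs zt k
end

section
/- For logit vectors z^s, z^t ∈ ℝ^K (K ≥ 1), the distillation loss converges as the temperature tends to infinity: lim_{τ→∞} L_KL(z^s, z^t, τ) = (1/(2K))·‖z^s − z^t‖₂² − (1/(2K²))·(∑_{j=1}^K z^s_j − ∑_{j=1}^K z^t_j)². -/
open Filter Topology

/-!
With `Z(z, τ) = ∑ j, exp (z j / τ)`, the loss splits as
`L_KL = τ ∑ j, p_j(z^t, τ) (z^t_j - z^s_j) + τ² log (Z(z^s, τ) / Z(z^t, τ))`.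
Replacing `log x` by `x - 1` and expanding `exp` to second order, this becomes a sum of
per-class terms tending to `(z^s_j - z^t_j)² / 2`, divided by `Z(z^t, τ) → K`, i.e.
`‖z^s - z^t‖² / (2K)`. Since `u = Z(z^s, τ) / Z(z^t, τ) - 1` satisfies
`τ u → ∑ j, (z^s_j - z^t_j) / K`, the correction `τ² (log (1 + u) - u) ≈ -(τ u)² / 2`
contributes the second term of the limit.
-/

open Real Finset
open scoped Nat

theorem tendsto_pow_mul_exp_div_sub_taylor (a : ℝ) (n : ℕ) :
    Tendsto (fun τ : ℝ => τ ^ n * (exp (a / τ) - ∑ m ∈ range n, (a / τ) ^ m / m !)) atTop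
      (𝓝 (a ^ n / n !)) := by
  set C : ℝ := n.succ.succ / ((n + 1)! * n.succ)
  rw [← tendsto_sub_nhds_zero_iff]
  refine squeeze_zero_norm' ?_ (tendsto_const_nhds.div_atTop tendsto_id :
    Tendsto (fun τ : ℝ => |a| ^ (n + 1) * C / τ) atTop (𝓝 0))
  filter_upwards [eventually_ge_atTop |a|, eventually_gt_atTop 0] with τ hτa hτ
  have hx : |a / τ| ≤ 1 := by rwa [abs_div, abs_of_pos hτ, div_le_one hτ]
  have hsplit : τ ^ n * (exp (a / τ) - ∑ m ∈ range n, (a / τ) ^ m / m !) - a ^ n / n !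
      = τ ^ n * (exp (a / τ) - ∑ m ∈ range (n + 1), (a / τ) ^ m / m !) := by
    rw [sum_range_succ, div_pow]
    field_simp
    ring
  rw [Real.norm_eq_abs, hsplit, abs_mul, abs_of_pos (pow_pos hτ n)]
  calc τ ^ n * |exp (a / τ) - ∑ m ∈ range (n + 1), (a / τ) ^ m / m !|
      ≤ τ ^ n * (|a / τ| ^ (n + 1) * C) :=
        mul_le_mul_of_nonneg_left (Real.exp_bound hx n.succ_pos) (by positivity)
    _ = |a| ^ (n + 1) * C / τ := by
        rw [abs_div, abs_of_pos hτ, div_pow, pow_succ τ]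
        field_simp

theorem tendsto_mul_exp_div_sub_one (a : ℝ) :
    Tendsto (fun τ : ℝ => τ * (exp (a / τ) - 1)) atTop (𝓝 a) := by
  simpa using tendsto_pow_mul_exp_div_sub_taylor a 1

theorem tendsto_sq_mul_exp_div_sub_one_sub (a : ℝ) :
    Tendsto (fun τ : ℝ => τ ^ 2 * (exp (a / τ) - 1 - a / τ)) atTop (𝓝 (a ^ 2 / 2)) := by
  simpa [sum_range_succ, sub_sub] using tendsto_pow_mul_exp_div_sub_taylor a 2

theorem abs_log_one_add_sub_add_sq_div_two_le {y : ℝ} (hy : |y| < 1) :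
    |log (1 + y) - y + y ^ 2 / 2| ≤ |y| ^ 3 / (1 - |y|) := by
  have h := abs_log_sub_add_sum_range_le (x := -y) (by rwa [abs_neg]) 2
  norm_num [sum_range_succ] at h
  convert h using 2
  ring

theorem tendsto_sq_mul_log_one_add_sub {y : ℝ → ℝ} {c : ℝ}
    (hy : Tendsto (fun τ => τ * y τ) atTop (𝓝 c)) :
    Tendsto (fun τ => τ ^ 2 * (log (1 + y τ) - y τ)) atTop (𝓝 (-(c ^ 2 / 2))) := by
  have hy0 : Tendsto y atTop (𝓝 0) := by
    refine (mul_zero c ▸ hy.mul tendsto_inv_atTop_zero).congr' ?_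
    filter_upwards [eventually_ne_atTop 0] with τ hτ
    field_simp
  have hbound : Tendsto (fun τ => (τ * y τ) ^ 2 * (|y τ| / (1 - |y τ|))) atTop (𝓝 0) := by
    simpa using (hy.pow 2).mul (hy0.abs.div (tendsto_const_nhds.sub hy0.abs) (by simp))
  have hrem : Tendsto (fun τ => τ ^ 2 * (log (1 + y τ) - y τ) + (τ * y τ) ^ 2 / 2) atTop
      (𝓝 0) := by
    refine squeeze_zero_norm' ?_ hbound
    filter_upwards [hy0.abs (eventually_lt_nhds (by simp : |(0 : ℝ)| < 1))] with τ hτ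
    calc ‖τ ^ 2 * (log (1 + y τ) - y τ) + (τ * y τ) ^ 2 / 2‖
        = |τ ^ 2 * (log (1 + y τ) - y τ + y τ ^ 2 / 2)| := by
          rw [Real.norm_eq_abs]
          ring_nf
      _ = τ ^ 2 * |log (1 + y τ) - y τ + y τ ^ 2 / 2| := by rw [abs_mul, abs_sq]
      _ ≤ τ ^ 2 * (|y τ| ^ 3 / (1 - |y τ|)) :=
          mul_le_mul_of_nonneg_left (abs_log_one_add_sub_add_sq_div_two_le hτ) (sq_nonneg τ)
      _ = (τ * y τ) ^ 2 * (|y τ| / (1 - |y τ|)) := by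
          rw [mul_pow, ← sq_abs (y τ)]
          ring
  simpa using hrem.sub ((hy.pow 2).div_const 2)

section PartitionFunction

variable {ι : Type*} [Fintype ι]

noncomputable def partitionFn (z : ι → ℝ) (τ : ℝ) : ℝ :=
  ∑ j, exp (z j / τ)

theorem partitionFn_pos [Nonempty ι] (z : ι → ℝ) (τ : ℝ) : 0 < partitionFn z τ :=
  sum_pos (fun _ _ => exp_pos _) univ_nonempty

theorem tendsto_partitionFn (z : ι → ℝ) :
    Tendsto (partitionFn z) atTop (𝓝 (Fintype.card ι)) := by
  have h : ∀ j, Tendsto (fun τ : ℝ => exp (z j / τ)) atTop (𝓝 1) := fun j => by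
    simpa [Function.comp_def] using
      (continuous_exp.tendsto 0).comp (tendsto_const_nhds.div_atTop tendsto_id)
  unfold partitionFn
  simpa using tendsto_finsetSum univ fun j _ => h j

theorem tendsto_mul_partitionFn_div_sub_one [Nonempty ι] (zs zt : ι → ℝ) :
    Tendsto (fun τ => τ * (partitionFn zs τ / partitionFn zt τ - 1)) atTop
      (𝓝 ((∑ j, (zs j - zt j)) / Fintype.card ι)) := by
  have hnum : Tendsto (fun τ => ∑ j, (τ * (exp (zs j / τ) - 1) - τ * (exp (zt j / τ) - 1)))
      atTop (𝓝 (∑ j, (zs j - zt j))) := tendsto_finsetSum univ fun j _ =>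
    (tendsto_mul_exp_div_sub_one (zs j)).sub (tendsto_mul_exp_div_sub_one (zt j))
  refine (hnum.div (tendsto_partitionFn zt) (by simp)).congr fun τ => ?_
  rw [Pi.div_apply, div_sub_one (partitionFn_pos zt τ).ne', mul_div_assoc']
  congr 1
  simp only [partitionFn, mul_sub, mul_sum, ← sum_sub_distrib]
  exact sum_congr rfl fun j _ => by ring

end PartitionFunction

theorem softProb_eq {K : ℕ} (z : Fin K → ℝ) (τ : ℝ) (k : Fin K) :
    softProb z τ k = exp (z k / τ) / partitionFn z τ := rfl

theorem sum_softProb {K : ℕ} [NeZero K] (z : Fin K → ℝ) (τ : ℝ) : ∑ j, softProb z τ j = 1 := by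
  simp_rw [softProb_eq, ← sum_div]
  exact div_self (partitionFn_pos z τ).ne'

theorem log_softProb_div_softProb {K : ℕ} [NeZero K] (zs zt : Fin K → ℝ) (τ : ℝ) (j : Fin K) :
    log (softProb zt τ j / softProb zs τ j)
      = (zt j - zs j) * τ⁻¹ + log (partitionFn zs τ / partitionFn zt τ) := by
  have hZs := partitionFn_pos zs τ
  have hZt := partitionFn_pos zt τ
  have hratio : softProb zt τ j / softProb zs τ j
      = exp ((zt j - zs j) * τ⁻¹) * (partitionFn zs τ / partitionFn zt τ) := by
    rw [softProb_eq, softProb_eq, sub_mul, exp_sub, ← div_eq_mul_inv, ← div_eq_mul_inv]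
    field_simp
  rw [hratio, log_mul (exp_pos _).ne' (div_pos hZs hZt).ne', log_exp]

theorem LKL_eq {K : ℕ} [NeZero K] (zs zt : Fin K → ℝ) (τ : ℝ) :
    LKL zs zt τ = τ * ∑ j, softProb zt τ j * (zt j - zs j)
      + τ ^ 2 * log (partitionFn zs τ / partitionFn zt τ) := by
  have hsum : ∑ j, softProb zt τ j * ((zt j - zs j) * τ⁻¹)
      = τ⁻¹ * ∑ j, softProb zt τ j * (zt j - zs j) := by
    rw [mul_sum]
    exact sum_congr rfl fun j _ => by ring
  simp_rw [LKL, log_softProb_div_softProb, mul_add, sum_add_distrib, ← sum_mul, sum_softProb, hsum]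
  rw [sq, mul_add, ← mul_assoc (τ * τ), mul_self_mul_inv]
  ring

theorem tendsto_mul_exp_sub_add_sq_mul_exp_sub (s t : ℝ) :
    Tendsto (fun τ : ℝ => τ * exp (t / τ) * (t - s) + τ ^ 2 * (exp (s / τ) - exp (t / τ)))
      atTop (𝓝 ((s - t) ^ 2 / 2)) := by
  have h := (((tendsto_mul_exp_div_sub_one t).mul_const (t - s)).add
    (tendsto_sq_mul_exp_div_sub_one_sub s)).sub (tendsto_sq_mul_exp_div_sub_one_sub t)
  rw [show (s - t) ^ 2 / 2 = t * (t - s) + s ^ 2 / 2 - t ^ 2 / 2 by ring]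
  refine h.congr' ?_
  filter_upwards [eventually_ne_atTop 0] with τ hτ
  field_simp
  ring

/-- `LKL_eq` with `log x` replaced by `x - 1`. -/
theorem tendsto_LKL_linearized {K : ℕ} [NeZero K] (zs zt : Fin K → ℝ) :
    Tendsto (fun τ => τ * ∑ j, softProb zt τ j * (zt j - zs j)
      + τ ^ 2 * (partitionFn zs τ / partitionFn zt τ - 1)) atTop
      (𝓝 ((∑ j, (zs j - zt j) ^ 2 / 2) / (K : ℝ))) := by
  have h := (tendsto_finsetSum univ fun j _ =>
    tendsto_mul_exp_sub_add_sq_mul_exp_sub (zs j) (zt j)).div (tendsto_partitionFn zt)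
    (by simpa using NeZero.ne K)
  rw [Fintype.card_fin] at h
  refine h.congr fun τ => ?_
  rw [Pi.div_apply, div_sub_one (partitionFn_pos zt τ).ne']
  simp only [softProb_eq, partitionFn, ← sum_sub_distrib, mul_sum, sum_div, ← sum_add_distrib]
  exact sum_congr rfl fun j _ => by ring

/-- `lim_{τ→∞} L_KL(z^s, z^t, τ)
  = (1/(2K))·‖z^s − z^t‖₂² − (1/(2K²))·(∑_j z^s_j − ∑_j z^t_j)²`. -/
theorem stmt_7 {K : ℕ} (hK : 1 ≤ K) (zs zt : Fin K → ℝ) :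
    Tendsto (fun τ : ℝ => LKL zs zt τ) atTop
      (𝓝 ((1 / (2 * (K : ℝ))) * ∑ j, (zs j - zt j) ^ 2 -
          (1 / (2 * (K : ℝ) ^ 2)) * ((∑ j, zs j) - ∑ j, zt j) ^ 2)) := by
  have : NeZero K := ⟨by omega⟩
  have hlog := tendsto_sq_mul_log_one_add_sub (tendsto_mul_partitionFn_div_sub_one zs zt)
  have hlim : (1 / (2 * (K : ℝ))) * ∑ j, (zs j - zt j) ^ 2 -
        (1 / (2 * (K : ℝ) ^ 2)) * ((∑ j, zs j) - ∑ j, zt j) ^ 2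
      = (∑ j, (zs j - zt j) ^ 2 / 2) / (K : ℝ)
        + -(((∑ j, (zs j - zt j)) / Fintype.card (Fin K)) ^ 2 / 2) := by
    rw [Fintype.card_fin, sum_sub_distrib, ← sum_div]
    field_simp
    ring
  rw [hlim]
  refine ((tendsto_LKL_linearized zs zt).add hlog).congr fun τ => ?_
  rw [LKL_eq, add_sub_cancel]
  ring
end
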